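/- arXiv:1907.13533 — 4 statements merged into one kernel-verified Lean document; each statement's English description precedes it below -/
import Mathlib

section
/- Let N ≥ 2 and define the softmax functions F₀,…,F_{N−1} on ℝ^{N−1} by F_i(z) = exp(z_i)/(1 + Σ_{j=1}^{N−1} exp(z_j)) for 1 ≤ i ≤ N−1 and F₀(z) = 1/(1 + Σ_{j=1}^{N−1} exp(z_j)). Then for every c > 0, the supremum over z ∈ ℝ^{N−1} and y ∈ ℝ^{N−1} with |y| ≤ c of (1/2)·Σ_{i=0}^{N−1}|F_i(z+y) − F_i(z)| is strictly less than 1. -/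
open Finset

/-- The multinomial-logistic (softmax) probabilities on `{0,…,N-1}` (encoded as
`Option (Fin m)` with `N = m + 1`), with parameter `z ∈ ℝ^{N-1}`; `none` plays the
role of the reference modality `0`. -/
noncomputable def softmax {m : ℕ} (z : Fin m → ℝ) : Option (Fin m) → ℝ
  | none => 1 / (1 + ∑ j, Real.exp (z j))
  | some i => Real.exp (z i) / (1 + ∑ j, Real.exp (z j))

/-! Shifting the parameter by at most `c` in each coordinate multiplies every numerator by at
least `e^{-c}` and the normaliser by at most `e^c`, so each softmax probability shrinks by a
factor of at most `e^{-2c}`. Two probability vectors with `q • r ≤ p` overlap in mass at least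
`q`, hence are at total variation distance at most `1 - q`. -/

theorem half_sum_abs_sub_le_one_sub_of_mul_le {ι : Type*} [Fintype ι] {p r : ι → ℝ} {q : ℝ}
    (hp : ∑ i, p i = 1) (hr : ∑ i, r i = 1) (hr0 : ∀ i, 0 ≤ r i) (hqr : ∀ i, q * r i ≤ p i) :
    (1 / 2) * ∑ i, |p i - r i| ≤ 1 - q := by
  have hq : q ≤ 1 := by
    simpa only [← mul_sum, hr, hp, mul_one] using sum_le_sum fun i (_ : i ∈ univ) => hqr i
  have hterm : ∀ i, |p i - r i| ≤ p i + r i - 2 * (q * r i) := fun i => by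
    rw [abs_le]
    constructor <;> nlinarith [hqr i, hr0 i]
  calc (1 / 2) * ∑ i, |p i - r i| ≤ (1 / 2) * ∑ i, (p i + r i - 2 * (q * r i)) := by
        gcongr with i; exact hterm i
    _ = 1 - q := by
        rw [sum_sub_distrib, sum_add_distrib, ← mul_sum, ← mul_sum, hp, hr]
        ring

section Softmax

variable {m : ℕ}

lemma softmax_nonneg (z : Fin m → ℝ) (i : Option (Fin m)) : 0 ≤ softmax z i := by
  cases i <;> simp only [softmax] <;> positivity

lemma sum_softmax (z : Fin m → ℝ) : ∑ i, softmax z i = 1 := by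
  have hD : (0 : ℝ) < 1 + ∑ j, Real.exp (z j) := by positivity
  rw [Fintype.sum_option]
  simp only [softmax, ← sum_div, ← add_div]
  exact div_self hD.ne'

lemma one_add_sum_exp_add_le {z y : Fin m → ℝ} {c : ℝ} (hc : 0 ≤ c) (hy : ∀ j, y j ≤ c) :
    1 + ∑ j, Real.exp ((z + y) j) ≤ Real.exp c * (1 + ∑ j, Real.exp (z j)) := by
  rw [mul_add, mul_one, mul_sum]
  gcongr with j
  · exact Real.one_le_exp hc
  · rw [← Real.exp_add, Pi.add_apply]
    exact Real.exp_le_exp.2 (by linarith [hy j])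

lemma exp_neg_two_mul_softmax_le_softmax_add {z y : Fin m → ℝ} {c : ℝ} (hc : 0 ≤ c)
    (hy : ∀ j, |y j| ≤ c) (i : Option (Fin m)) :
    Real.exp (-(2 * c)) * softmax z i ≤ softmax (z + y) i := by
  have hDz : (0 : ℝ) < 1 + ∑ j, Real.exp (z j) := by positivity
  have hDzy : (0 : ℝ) < 1 + ∑ j, Real.exp ((z + y) j) := by positivity
  have hD := one_add_sum_exp_add_le (z := z) hc fun j => (abs_le.1 (hy j)).2
  have hratio : ∀ a b : ℝ, Real.exp (-c) * a ≤ b → 0 ≤ b →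
      Real.exp (-(2 * c)) * (a / (1 + ∑ j, Real.exp (z j))) ≤
        b / (1 + ∑ j, Real.exp ((z + y) j)) := fun a b hab hb => by
    calc Real.exp (-(2 * c)) * (a / (1 + ∑ j, Real.exp (z j)))
        = Real.exp (-c) * a / (Real.exp c * (1 + ∑ j, Real.exp (z j))) := by
          rw [show -(2 * c) = -c + -c by ring, Real.exp_add, Real.exp_neg]
          field_simp
      _ ≤ b / (1 + ∑ j, Real.exp ((z + y) j)) := div_le_div₀ hb hab hDzy hD
  cases i with
  | none =>
    exact hratio 1 1 (by simpa using Real.exp_le_one_iff.2 (neg_nonpos.2 hc)) zero_le_one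
  | some i =>
    refine hratio _ _ ?_ (Real.exp_pos _).le
    rw [← Real.exp_add, Pi.add_apply]
    exact Real.exp_le_exp.2 (by linarith [(abs_le.1 (hy i)).1])

end Softmax

theorem stmt3_general (m : ℕ) (c : ℝ) (hc : 0 < c) :
    ∃ ε < 1, ∀ z y : Fin m → ℝ, (∀ j, |y j| ≤ c) →
      (1 / 2) * ∑ i : Option (Fin m), |softmax (z + y) i - softmax z i| ≤ ε :=
  ⟨1 - Real.exp (-(2 * c)), sub_lt_self _ (Real.exp_pos _), fun z _ hy =>
    half_sum_abs_sub_le_one_sub_of_mul_le (sum_softmax _) (sum_softmax z) (softmax_nonneg z)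
      (exp_neg_two_mul_softmax_le_softmax_add hc.le hy)⟩

/-- For every `c > 0`, the supremum over `z` and `‖y‖_∞ ≤ c` of the total variation
distance between the softmax distributions with parameters `z + y` and `z` is
strictly less than `1`. -/
theorem stmt3 (m : ℕ) (hm : 1 ≤ m) (c : ℝ) (hc : 0 < c) :
    ∃ ε < 1, ∀ z y : Fin m → ℝ, (∀ j, |y j| ≤ c) →
      (1 / 2) * ∑ i : Option (Fin m), |softmax (z + y) i - softmax z i| ≤ ε :=
  stmt3_general m c hc
end

section
/- Let (b_m)_{m≥0} be a nonincreasing sequence in [0,1) with b₀ < 1, and let (S_n)_{n≥0} be the Markov chain on ℕ started at 0 with transition probabilities P(i, i+1) = 1 − b_i and P(i, 0) = b_i. Define b*_n = P(S_n = 0) for n ≥ 1 and b*₀ = b₀. If Σ_{m≥1} b_m < ∞ then Σ_{m≥1} b*_m < ∞. -/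
/-!
The visits of the chain to `0` form a renewal process: writing `p i = ∏_{k<i} (1 - b k)` for the
probability of `i` steps without a reset, `u n = P(S_n = 0)` satisfies the renewal equation
`u (n + 1) = ∑_{i ≤ n} p i * b i * u (n - i)`. The first-return distribution `p i * b i` has total
mass `1 - lim p N`, and `lim p N > 0` because `∑ b < ∞` and every `b k < 1`. So the renewal process
is transient: if `r < 1` bounds the return mass, the partial sums of `u` satisfy `S ≤ u 0 + r * S`,
whence `∑ u n ≤ u 0 / (1 - r)`.
-/

/-- Distribution of the "house-of-cards" Markov chain on `ℕ` started at `0`, with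
transitions `P(i, i+1) = 1 - b i` and `P(i, 0) = b i`:
`hoc b n j` is the probability that the chain is at state `j` at time `n`. -/
noncomputable def hoc (b : ℕ → ℝ) : ℕ → ℕ → ℝ
  | 0 => fun j => if j = 0 then 1 else 0
  | n + 1 => fun j =>
      match j with
      | 0 => ∑' i, hoc b n i * b i
      | i + 1 => hoc b n i * (1 - b i)

open Finset

theorem sum_range_conv_le_mul {R : Type*} [CommSemiring R] [PartialOrder R] [IsOrderedRing R]
    {G U : ℕ → R} (hG : ∀ i, 0 ≤ G i) (hU : ∀ i, 0 ≤ U i) (N : ℕ) :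
    ∑ n ∈ range N, ∑ i ∈ range (n + 1), G i * U (n - i) ≤
      (∑ i ∈ range N, G i) * ∑ j ∈ range N, U j := by
  rw [sum_range_diag_flip N fun i j => G i * U j, sum_mul]
  refine sum_le_sum fun i _ => ?_
  rw [← mul_sum]
  exact mul_le_mul_of_nonneg_left
    (sum_le_sum_of_subset_of_nonneg (range_subset_range.2 (Nat.sub_le N i)) fun j _ _ => hU j)
    (hG i)

theorem summable_of_le_renewal {u g : ℕ → ℝ} {r : ℝ} (hu : ∀ n, 0 ≤ u n) (hg : ∀ i, 0 ≤ g i)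
    (hr : r < 1) (hgr : ∀ N, ∑ i ∈ range N, g i ≤ r)
    (hrec : ∀ n, u (n + 1) ≤ ∑ i ∈ range (n + 1), g i * u (n - i)) : Summable u := by
  have hr0 : 0 ≤ r := by simpa using hgr 0
  refine summable_of_sum_range_le (c := u 0 / (1 - r)) hu fun N => ?_
  have hmono : ∑ n ∈ range N, u n ≤ ∑ n ∈ range (N + 1), u n :=
    sum_le_sum_of_subset_of_nonneg (range_subset_range.2 N.le_succ) fun n _ _ => hu n
  have hstep : ∑ n ∈ range (N + 1), u n ≤ u 0 + r * ∑ n ∈ range (N + 1), u n :=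
    calc ∑ n ∈ range (N + 1), u n
        = u 0 + ∑ n ∈ range N, u (n + 1) := by rw [sum_range_succ', add_comm]
      _ ≤ u 0 + ∑ n ∈ range N, ∑ i ∈ range (n + 1), g i * u (n - i) := by
        gcongr with n; exact hrec n
      _ ≤ u 0 + (∑ i ∈ range N, g i) * ∑ n ∈ range N, u n := by
        gcongr; exact sum_range_conv_le_mul hg hu N
      _ ≤ u 0 + r * ∑ n ∈ range (N + 1), u n := by
        gcongr
        exacts [sum_nonneg fun n _ => hu n, hgr N]
  rw [le_div_iff₀ (sub_pos.2 hr)]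
  nlinarith

theorem exists_pos_le_prod_range_one_sub {b : ℕ → ℝ} (hb0 : ∀ k, 0 ≤ b k) (hb1 : ∀ k, b k < 1)
    (hb : Summable b) : ∃ c > 0, ∀ N, c ≤ ∏ k ∈ range N, (1 - b k) := by
  have hlog : Summable fun k => Real.log (1 - b k) := by
    simpa [sub_eq_add_neg] using Real.summable_log_one_add_of_summable hb.neg
  have hlim :=
    (Real.hasProd_of_hasSum_log (fun k => sub_pos.2 (hb1 k)) hlog.hasSum).tendsto_prod_nat
  have hanti : Antitone fun N => ∏ k ∈ range N, (1 - b k) := antitone_nat_of_succ_le fun N => by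
    rw [prod_range_succ]
    exact mul_le_of_le_one_right (prod_nonneg fun k _ => (sub_pos.2 (hb1 k)).le)
      (sub_le_self 1 (hb0 N))
  exact ⟨_, Real.exp_pos _, fun N => hanti.le_of_tendsto hlim N⟩

theorem sum_range_prod_one_sub_mul (b : ℕ → ℝ) (N : ℕ) :
    ∑ i ∈ range N, (∏ k ∈ range i, (1 - b k)) * b i = 1 - ∏ k ∈ range N, (1 - b k) := by
  induction N with
  | zero => simp
  | succ N ih => rw [sum_range_succ, ih, prod_range_succ]; ring

theorem hoc_eq_ite (b : ℕ → ℝ) (n j : ℕ) :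
    hoc b n j = if j ≤ n then hoc b (n - j) 0 * ∏ k ∈ range j, (1 - b k) else 0 := by
  induction n generalizing j with
  | zero => cases j <;> simp [hoc]
  | succ n ih =>
    cases j with
    | zero => simp
    | succ i =>
      change hoc b n i * (1 - b i) = _
      rw [ih i]
      by_cases h : i ≤ n
      · rw [if_pos h, if_pos (by omega), Nat.add_sub_add_right, prod_range_succ, mul_assoc]
      · rw [if_neg h, if_neg (by omega), zero_mul]

theorem hoc_succ_zero (b : ℕ → ℝ) (n : ℕ) :
    hoc b (n + 1) 0 =
      ∑ i ∈ range (n + 1), (∏ k ∈ range i, (1 - b k)) * b i * hoc b (n - i) 0 := by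
  change ∑' i, hoc b n i * b i = _
  rw [tsum_eq_sum (s := range (n + 1)) fun i hi => by
    rw [hoc_eq_ite, if_neg (by simpa using hi), zero_mul]]
  refine sum_congr rfl fun i hi => ?_
  rw [hoc_eq_ite, if_pos (Nat.lt_succ_iff.1 (mem_range.1 hi))]
  ring

theorem hoc_zero_nonneg {b : ℕ → ℝ} (hb0 : ∀ m, 0 ≤ b m) (hb1 : ∀ m, b m ≤ 1) (n : ℕ) :
    0 ≤ hoc b n 0 := by
  induction n using Nat.strong_induction_on with
  | _ n ih =>
    cases n with
    | zero => simp [hoc]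
    | succ n =>
      rw [hoc_succ_zero]
      exact sum_nonneg fun i _ => mul_nonneg
        (mul_nonneg (prod_nonneg fun k _ => sub_nonneg.2 (hb1 k)) (hb0 i)) (ih _ (by omega))

theorem stmt5_general (b : ℕ → ℝ) (hb0 : ∀ m, 0 ≤ b m) (hb1 : ∀ m, b m < 1)
    (hsum : Summable fun m => b (m + 1)) :
    Summable (fun m => hoc b (m + 1) 0) := by
  have hb1' : ∀ m, b m ≤ 1 := fun m => (hb1 m).le
  obtain ⟨c, hc, hcle⟩ :=
    exists_pos_le_prod_range_one_sub hb0 hb1 ((summable_nat_add_iff 1).1 hsum)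
  have hreturn_mass (N : ℕ) : ∑ i ∈ range N, (∏ k ∈ range i, (1 - b k)) * b i ≤ 1 - c := by
    rw [sum_range_prod_one_sub_mul]
    linarith [hcle N]
  refine (summable_nat_add_iff 1).2 <| summable_of_le_renewal (hoc_zero_nonneg hb0 hb1')
    (fun i => mul_nonneg (prod_nonneg fun k _ => sub_nonneg.2 (hb1' k)) (hb0 i))
    (sub_lt_self 1 hc) hreturn_mass fun n => (hoc_succ_zero b n).le

/-- If `(b m)` is nonincreasing in `[0,1)` with `b 0 < 1` and `Σ_{m≥1} b m < ∞`, then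
`Σ_{m≥1} b*_m < ∞`, where `b*_n = P(S_n = 0)` for the house-of-cards chain. -/
theorem stmt5 (b : ℕ → ℝ) (hb0 : ∀ m, 0 ≤ b m) (hb1 : ∀ m, b m < 1) (hb01 : b 0 < 1)
    (hmono : Antitone b) (hsum : Summable fun m => b (m + 1)) :
    Summable (fun m => hoc b (m + 1) 0) :=
  stmt5_general b hb0 hb1 hsum
end

section
/- Let (G_{y,x})_{(y,x)∈E×ℝ^d} be a family of maps ℝ^k → ℝ^k such that (i) |G_{y,x}(z) − G_{y',x'}(z')| ≤ L(1_{y≠y'} + |x−x'| + |z−z'|) for some L ≥ 1, and (ii) there exist r ∈ ℕ* and κ ∈ (0,1) such that every r-fold composition G_{y₁,x₁}∘⋯∘G_{y_r,x_r} is κ-Lipschitz. Fix sequences y ∈ E^ℤ and x with Σ_{i≥0} κ^{i/r}|x_{t−i}| < ∞. Then for each t the sequence λ_{n,t} := G_{y_{t−1},x_t}∘⋯∘G_{y_{t−n−1},x_{t−n}}(0) converges in ℝ^k as n → ∞. -/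
/-!
The `r`-fold contraction makes any composition of `n` of the maps `κ^⌊n/r⌋ L^r`-Lipschitz.
Consecutive terms `λ_{n,t}` and `λ_{n+1,t}` differ only in the innermost input
(`0` versus `G_{y,x_{t-n-1}}(0)`), so they are at distance at most a constant times
`κ^((n+1)/r) (1 + ‖x_{t-n-1}‖)`. These bounds are summable by assumption, so the sequence is
Cauchy.
-/

open Classical

/-- Backward iterates of the observation-driven recursion:
`backIter G y x t n z = G (y (t-1)) (x t) (G (y (t-2)) (x (t-1)) (… (G (y (t-n)) (x (t-n+1)) z)))`,
the composition of the `n` maps `G_{y_{t-1},x_t} ∘ ⋯ ∘ G_{y_{t-n},x_{t-n+1}}` applied to `z`. -/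
def backIter {E V W : Type*} (G : E → V → W → W) (y : ℤ → E) (x : ℤ → V) :
    ℤ → ℕ → W → W
  | _, 0, z => z
  | t, n + 1, z => G (y (t - 1)) (x t) (backIter G y x (t - 1) n z)

section BackIter

variable {E V W : Type*} (G : E → V → W → W) (y : ℤ → E) (x : ℤ → V)

lemma backIter_add (m n : ℕ) (t : ℤ) (z : W) :
    backIter G y x t (m + n) z = backIter G y x t m (backIter G y x (t - m) n z) := by
  induction m generalizing t with
  | zero => simp [backIter]
  | succ m ih =>
    rw [Nat.succ_add]
    simp only [backIter, ih]
    rw [show t - ((m + 1 : ℕ) : ℤ) = t - 1 - m by push_cast; ring]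

lemma backIter_succ_right (n : ℕ) (t : ℤ) (z : W) :
    backIter G y x t (n + 1) z = backIter G y x t n (G (y (t - n - 1)) (x (t - n)) z) :=
  backIter_add G y x n 1 t z

variable [SeminormedAddCommGroup W]

lemma norm_backIter_sub_le_pow {L : ℝ} (hL : 0 ≤ L)
    (hG : ∀ e v (z z' : W), ‖G e v z - G e v z'‖ ≤ L * ‖z - z'‖) (n : ℕ) (t : ℤ) (z z' : W) :
    ‖backIter G y x t n z - backIter G y x t n z'‖ ≤ L ^ n * ‖z - z'‖ := by
  induction n generalizing t with
  | zero => simp [backIter]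
  | succ n ih =>
    calc ‖backIter G y x t (n + 1) z - backIter G y x t (n + 1) z'‖
        ≤ L * ‖backIter G y x (t - 1) n z - backIter G y x (t - 1) n z'‖ := hG _ _ _ _
      _ ≤ L * (L ^ n * ‖z - z'‖) := by gcongr; exact ih _
      _ = L ^ (n + 1) * ‖z - z'‖ := by ring

lemma norm_backIter_mul_sub_le {κ : ℝ} (hκ : 0 ≤ κ) {r : ℕ}
    (hcontract : ∀ t (z z' : W),
      ‖backIter G y x t r z - backIter G y x t r z'‖ ≤ κ * ‖z - z'‖)
    (q : ℕ) (t : ℤ) (z z' : W) :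
    ‖backIter G y x t (q * r) z - backIter G y x t (q * r) z'‖ ≤ κ ^ q * ‖z - z'‖ := by
  induction q generalizing t with
  | zero => simp [backIter]
  | succ q ih =>
    rw [Nat.succ_mul, add_comm, backIter_add, backIter_add]
    calc _ ≤ κ * ‖backIter G y x (t - r) (q * r) z - backIter G y x (t - r) (q * r) z'‖ :=
          hcontract _ _ _
      _ ≤ κ * (κ ^ q * ‖z - z'‖) := by gcongr; exact ih _
      _ = κ ^ (q + 1) * ‖z - z'‖ := by ring

lemma norm_backIter_sub_le {L κ : ℝ} (hL : 1 ≤ L) (hκ : 0 ≤ κ) {r : ℕ} (hr : 0 < r)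
    (hG : ∀ e v (z z' : W), ‖G e v z - G e v z'‖ ≤ L * ‖z - z'‖)
    (hcontract : ∀ t (z z' : W),
      ‖backIter G y x t r z - backIter G y x t r z'‖ ≤ κ * ‖z - z'‖)
    (n : ℕ) (t : ℤ) (z z' : W) :
    ‖backIter G y x t n z - backIter G y x t n z'‖ ≤ κ ^ (n / r) * L ^ r * ‖z - z'‖ := by
  conv_lhs => rw [← Nat.div_add_mod' n r, backIter_add, backIter_add]
  calc _ ≤ κ ^ (n / r) * ‖backIter G y x (t - ↑(n / r * r)) (n % r) z
            - backIter G y x (t - ↑(n / r * r)) (n % r) z'‖ :=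
        norm_backIter_mul_sub_le G y x hκ hcontract _ _ _ _
    _ ≤ κ ^ (n / r) * (L ^ (n % r) * ‖z - z'‖) := by
        gcongr; exact norm_backIter_sub_le_pow G y x (by linarith) hG _ _ _ _
    _ ≤ κ ^ (n / r) * (L ^ r * ‖z - z'‖) := by
        gcongr
        exact (Nat.mod_lt n hr).le
    _ = κ ^ (n / r) * L ^ r * ‖z - z'‖ := by ring

end BackIter

lemma pow_div_le_inv_mul_rpow {κ : ℝ} (hκ0 : 0 < κ) (hκ1 : κ ≤ 1) {r : ℕ} (hr : 0 < r)
    (m : ℕ) : κ ^ (m / r) ≤ κ⁻¹ * κ ^ ((m : ℝ) / r) := by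
  rw [le_inv_mul_iff₀ hκ0, ← pow_succ', ← Real.rpow_natCast]
  apply Real.rpow_le_rpow_of_exponent_ge hκ0 hκ1
  rw [div_le_iff₀ (by exact_mod_cast hr)]
  have : m ≤ (m / r + 1) * r := by rw [add_one_mul]; exact (Nat.lt_div_mul_add hr).le
  exact_mod_cast this

lemma summable_rpow_div {κ : ℝ} (hκ0 : 0 ≤ κ) (hκ1 : κ < 1) {r : ℕ} (hr : 0 < r) :
    Summable fun i : ℕ => κ ^ ((i : ℝ) / r) := by
  have hq : κ ^ ((1 : ℝ) / r) < 1 := Real.rpow_lt_one hκ0 hκ1 (by positivity)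
  refine (summable_geometric_of_lt_one (by positivity) hq).congr fun i => ?_
  rw [← Real.rpow_natCast, ← Real.rpow_mul hκ0, one_div_mul_eq_div]

lemma cauchySeq_backIter_zero {E V W : Type*} [SeminormedAddCommGroup V]
    [SeminormedAddCommGroup W] (G : E → V → W → W) {L : ℝ} (hL : 1 ≤ L)
    (hLip : ∀ (y y' : E) (x x' : V) (z z' : W),
      ‖G y x z - G y' x' z'‖ ≤
        L * ((if y = y' then (0 : ℝ) else 1) + ‖x - x'‖ + ‖z - z'‖))
    {r : ℕ} (hr : 0 < r) {κ : ℝ} (hκ0 : 0 < κ) (hκ1 : κ < 1) (y : ℤ → E) (x : ℤ → V)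
    (hcontract : ∀ t (z z' : W),
      ‖backIter G y x t r z - backIter G y x t r z'‖ ≤ κ * ‖z - z'‖)
    {t : ℤ} (hx : Summable fun i : ℕ => κ ^ ((i : ℝ) / r) * ‖x (t - i)‖) :
    CauchySeq fun n : ℕ => backIter G y x t (n + 1) 0 := by
  set M := ‖G (y 0) 0 0‖ + L
  have hG : ∀ e v (z z' : W), ‖G e v z - G e v z'‖ ≤ L * ‖z - z'‖ := fun e v z z' => by
    simpa using hLip e e v v z z'
  have hG0 : ∀ e v, ‖G e v 0‖ ≤ M + L * ‖v‖ := fun e v => by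
    calc ‖G e v 0‖ ≤ ‖G e v 0 - G (y 0) 0 0‖ + ‖G (y 0) 0 0‖ := norm_le_norm_sub_add _ _
      _ ≤ L * (1 + ‖v‖) + ‖G (y 0) 0 0‖ := by
        grw [hLip e (y 0) v 0 0 0]
        simp only [sub_zero, norm_zero, add_zero]
        gcongr
        split_ifs <;> norm_num
      _ = M + L * ‖v‖ := by ring
  set g : ℕ → ℝ := fun i => κ ^ ((i : ℝ) / r) * (M + L * ‖x (t - i)‖)
  have hg : Summable g := by
    refine (((summable_rpow_div hκ0.le hκ1 hr).mul_right M).add (hx.mul_left L)).congr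
      fun i => ?_
    simp only [g]
    ring
  refine cauchySeq_of_dist_le_of_summable (fun n => κ⁻¹ * L ^ r * g (n + 1)) (fun n => ?_)
    (((summable_nat_add_iff 1).2 hg).mul_left _)
  calc dist (backIter G y x t (n + 1) 0) (backIter G y x t (n + 1 + 1) 0)
      = ‖backIter G y x t (n + 1) 0
          - backIter G y x t (n + 1) (G (y (t - ↑(n + 1) - 1)) (x (t - ↑(n + 1))) 0)‖ := by
        rw [dist_eq_norm, backIter_succ_right G y x (n + 1)]
    _ ≤ κ ^ ((n + 1) / r) * L ^ r * ‖0 - G (y (t - ↑(n + 1) - 1)) (x (t - ↑(n + 1))) 0‖ :=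
        norm_backIter_sub_le G y x hL hκ0.le hr hG hcontract _ _ _ _
    _ ≤ κ⁻¹ * κ ^ (((n + 1 : ℕ) : ℝ) / r) * L ^ r * (M + L * ‖x (t - ↑(n + 1))‖) := by
        rw [zero_sub, norm_neg]
        gcongr
        · exact pow_div_le_inv_mul_rpow hκ0 hκ1.le hr _
        · exact hG0 _ _
    _ = κ⁻¹ * L ^ r * g (n + 1) := by simp only [g]; ring

/-- Under the joint Lipschitz bound on `G` and contraction of `r`-fold compositions,
for a covariate sequence with summable weighted norms, the backward iterates
`λ_{n,t} = G_{y_{t-1},x_t} ∘ ⋯ ∘ G_{y_{t-n-1},x_{t-n}} (0)` converge as `n → ∞`. -/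
theorem stmt11 {E V W : Type*} [NormedAddCommGroup V] [NormedAddCommGroup W]
    [CompleteSpace W]
    (G : E → V → W → W) (L : ℝ) (hL : 1 ≤ L)
    (hLip : ∀ (y y' : E) (x x' : V) (z z' : W),
      ‖G y x z - G y' x' z'‖ ≤
        L * ((if y = y' then (0 : ℝ) else 1) + ‖x - x'‖ + ‖z - z'‖))
    (r : ℕ) (hr : 0 < r) (κ : ℝ) (hκ : κ ∈ Set.Ioo (0 : ℝ) 1)
    (hcontract : ∀ (y : ℤ → E) (x : ℤ → V) (t : ℤ) (z z' : W),
      ‖backIter G y x t r z - backIter G y x t r z'‖ ≤ κ * ‖z - z'‖)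
    (y : ℤ → E) (x : ℤ → V)
    (hx : ∀ t : ℤ, Summable fun i : ℕ => κ ^ ((i : ℝ) / (r : ℝ)) * ‖x (t - i)‖) :
    ∀ t : ℤ, ∃ l : W,
      Filter.Tendsto (fun n : ℕ => backIter G y x t (n + 1) 0) Filter.atTop (nhds l) :=
  fun t => cauchySeq_tendsto_of_complete
    (cauchySeq_backIter_zero G hL hLip hr hκ.1 hκ.2 y x (hcontract y x) (hx t))
end

section
/- Perturbation bound for finite Markov chains via the Dobrushin coefficient: let q and q̄ be stochastic matrices on a finite set E with Dobrushin contraction coefficient b₀ = sup_{y,y'} d_TV(q(·|y), q(·|y')) < 1 for q (and analogously for q̄), each with unique stationary distributions π and π̄. Then d_TV(π, π̄) ≤ (1 − b₀)^{−1} · sup_{y∈E} d_TV(q(·|y), q̄(·|y)). -/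
/-!
Write `μ = π - π̄`, a vector of total mass zero. Stationarity gives
`μ = μ q + π̄ (q - q̄)`. For a zero-sum `μ`, pairing `μ q` with the sign vector of `μ q`
is pairing `μ` with a function whose oscillation is at most `2 b₀`, so
`‖μ q‖₁ ≤ b₀ ‖μ‖₁`; the second term has `ℓ¹` norm at most `2 δ`. Hence
`‖μ‖₁ ≤ b₀ ‖μ‖₁ + 2 δ`, and `b₀ < 1` lets us solve for `‖μ‖₁`.
-/

open Finset

section Dobrushin

variable {ι κ : Type*} [Fintype ι] [Fintype κ]

theorem SignType.abs_coe_le_one {α : Type*} [Ring α] [LinearOrder α] [IsStrictOrderedRing α]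
    (s : SignType) : |(s : α)| ≤ 1 := by
  cases s <;> simp

theorem exists_abs_sub_le_half_of_sub_le {α : Type*} [Finite α] [Nonempty α] {f : α → ℝ} {c : ℝ}
    (hf : ∀ i j, f i - f j ≤ c) : ∃ a, ∀ i, |f i - a| ≤ c / 2 := by
  obtain ⟨i₁, hi₁⟩ := Finite.exists_max f
  obtain ⟨i₀, hi₀⟩ := Finite.exists_min f
  refine ⟨(f i₁ + f i₀) / 2, fun i => abs_le.mpr ⟨?_, ?_⟩⟩ <;>
    linarith [hi₁ i, hi₀ i, hf i₁ i₀]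

theorem sum_mul_le_of_sum_eq_zero {μ f : ι → ℝ} {c : ℝ} (hμ : ∑ i, μ i = 0)
    (hf : ∀ i j, f i - f j ≤ c) : ∑ i, μ i * f i ≤ c / 2 * ∑ i, |μ i| := by
  cases isEmpty_or_nonempty ι
  · simp
  obtain ⟨a, ha⟩ := exists_abs_sub_le_half_of_sub_le hf
  calc ∑ i, μ i * f i = ∑ i, μ i * (f i - a) := by
        simp only [mul_sub, sum_sub_distrib, ← sum_mul, hμ, zero_mul, sub_zero]
    _ ≤ ∑ i, |μ i| * (c / 2) := by
        refine sum_le_sum fun i _ => ?_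
        calc μ i * (f i - a) ≤ |μ i * (f i - a)| := le_abs_self _
          _ = |μ i| * |f i - a| := abs_mul _ _
          _ ≤ |μ i| * (c / 2) := by gcongr; exact ha i
    _ = c / 2 * ∑ i, |μ i| := by rw [← sum_mul, mul_comm]

theorem sum_abs_sum_mul_le_of_dobrushin (q : ι → κ → ℝ) {b : ℝ}
    (hq : ∀ i j, (1 / 2) * ∑ k, |q i k - q j k| ≤ b) {μ : ι → ℝ} (hμ : ∑ i, μ i = 0) :
    ∑ k, |∑ i, μ i * q i k| ≤ b * ∑ i, |μ i| := by
  set s : κ → ℝ := fun k => SignType.sign (∑ i, μ i * q i k)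
  have hosc : ∀ i j, ∑ k, s k * q i k - ∑ k, s k * q j k ≤ 2 * b := fun i j =>
    calc ∑ k, s k * q i k - ∑ k, s k * q j k = ∑ k, s k * (q i k - q j k) := by
          simp only [mul_sub, sum_sub_distrib]
      _ ≤ ∑ k, |q i k - q j k| := by
          gcongr with k
          calc s k * (q i k - q j k) ≤ |s k| * |q i k - q j k| := by
                rw [← abs_mul]; exact le_abs_self _
            _ ≤ 1 * |q i k - q j k| := by gcongr; exact SignType.abs_coe_le_one _
            _ = |q i k - q j k| := one_mul _
      _ ≤ 2 * b := by linarith [hq i j]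
  calc ∑ k, |∑ i, μ i * q i k| = ∑ k, s k * ∑ i, μ i * q i k := by
        simp only [s, sign_mul_self]
    _ = ∑ i, μ i * ∑ k, s k * q i k := by
        simp only [mul_sum]
        rw [sum_comm]
        exact sum_congr rfl fun _ _ => sum_congr rfl fun _ _ => by ring
    _ ≤ 2 * b / 2 * ∑ i, |μ i| := sum_mul_le_of_sum_eq_zero hμ hosc
    _ = b * ∑ i, |μ i| := by ring

theorem sum_abs_sum_mul_le_of_nonneg {w : ι → ℝ} (hw : ∀ i, 0 ≤ w i) (r : ι → κ → ℝ) :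
    ∑ k, |∑ i, w i * r i k| ≤ ∑ i, w i * ∑ k, |r i k| :=
  calc ∑ k, |∑ i, w i * r i k| ≤ ∑ k, ∑ i, w i * |r i k| := by
        gcongr with k
        refine (abs_sum_le_sum_abs _ _).trans_eq (sum_congr rfl fun i _ => ?_)
        rw [abs_mul, abs_of_nonneg (hw i)]
    _ = ∑ i, w i * ∑ k, |r i k| := by
        rw [sum_comm]; simp only [mul_sum]

end Dobrushin

theorem stmt17_general {E : Type*} [Fintype E]
    (q qbar : E → E → ℝ)
    (b₀ : ℝ) (hb₀ : b₀ < 1)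
    (hDob : ∀ y y', (1 / 2) * ∑ z, |q y z - q y' z| ≤ b₀)
    (π πbar : E → ℝ)
    (hπ1 : ∑ z, π z = 1)
    (hπbar0 : ∀ z, 0 ≤ πbar z) (hπbar1 : ∑ z, πbar z = 1)
    (hπstat : ∀ z, ∑ y, π y * q y z = π z)
    (hπbarstat : ∀ z, ∑ y, πbar y * qbar y z = πbar z)
    (δ : ℝ) (hδ : ∀ y, (1 / 2) * ∑ z, |q y z - qbar y z| ≤ δ) :
    (1 / 2) * ∑ z, |π z - πbar z| ≤ (1 - b₀)⁻¹ * δ := by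
  set μ : E → ℝ := fun y => π y - πbar y
  have hμ : ∑ y, μ y = 0 := by simp [μ, sum_sub_distrib, hπ1, hπbar1]
  have hsplit : ∀ z, μ z = ∑ y, μ y * q y z + ∑ y, πbar y * (q y z - qbar y z) := fun z => by
    simp only [μ, ← hπstat z, ← hπbarstat z, ← sum_add_distrib, ← sum_sub_distrib]
    exact sum_congr rfl fun y _ => by ring
  have hperturb : ∑ z, |∑ y, πbar y * (q y z - qbar y z)| ≤ 2 * δ :=
    calc _ ≤ ∑ y, πbar y * ∑ z, |q y z - qbar y z| := sum_abs_sum_mul_le_of_nonneg hπbar0 _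
      _ ≤ ∑ y, πbar y * (2 * δ) :=
          sum_le_sum fun y _ => mul_le_mul_of_nonneg_left (by linarith [hδ y]) (hπbar0 y)
      _ = 2 * δ := by rw [← sum_mul, hπbar1, one_mul]
  have hrec : ∑ z, |μ z| ≤ b₀ * ∑ z, |μ z| + 2 * δ :=
    calc ∑ z, |μ z| ≤ ∑ z, |∑ y, μ y * q y z| + ∑ z, |∑ y, πbar y * (q y z - qbar y z)| := by
          rw [← sum_add_distrib]
          gcongr with z
          rw [hsplit z]; exact abs_add_le _ _
      _ ≤ b₀ * ∑ z, |μ z| + 2 * δ :=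
          add_le_add (sum_abs_sum_mul_le_of_dobrushin q hDob hμ) hperturb
  rw [le_inv_mul_iff₀ (by linarith)]
  linarith

/-- Perturbation bound for finite Markov chains via the Dobrushin ergodicity
coefficient: if `b₀ < 1` bounds the Dobrushin coefficient of `q`, and `π, π̄` are
stationary distributions of the stochastic matrices `q, q̄`, then
`d_TV(π, π̄) ≤ (1 - b₀)⁻¹ · sup_y d_TV(q(·|y), q̄(·|y))`. -/
theorem stmt17 {E : Type*} [Fintype E] [Nonempty E]
    (q qbar : E → E → ℝ)
    (hq0 : ∀ y z, 0 ≤ q y z) (hq1 : ∀ y, ∑ z, q y z = 1)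
    (hqbar0 : ∀ y z, 0 ≤ qbar y z) (hqbar1 : ∀ y, ∑ z, qbar y z = 1)
    (b₀ : ℝ) (hb₀ : b₀ < 1)
    (hDob : ∀ y y', (1 / 2) * ∑ z, |q y z - q y' z| ≤ b₀)
    (π πbar : E → ℝ)
    (hπ0 : ∀ z, 0 ≤ π z) (hπ1 : ∑ z, π z = 1)
    (hπbar0 : ∀ z, 0 ≤ πbar z) (hπbar1 : ∑ z, πbar z = 1)
    (hπstat : ∀ z, ∑ y, π y * q y z = π z)
    (hπbarstat : ∀ z, ∑ y, πbar y * qbar y z = πbar z)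
    (δ : ℝ) (hδ : ∀ y, (1 / 2) * ∑ z, |q y z - qbar y z| ≤ δ) :
    (1 / 2) * ∑ z, |π z - πbar z| ≤ (1 - b₀)⁻¹ * δ :=
  stmt17_general q qbar b₀ hb₀ hDob π πbar hπ1 hπbar0 hπbar1 hπstat hπbarstat δ hδ
end
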